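/- arXiv:1707.04355 — 3 statements merged into one kernel-verified Lean document; each statement's English description precedes it below -/
import Mathlib

section
/- Let M be the 5×5 integer matrix with rows (-6,1,1,1,0), (1,-2,0,0,1), (1,0,-2,0,1), (1,0,0,-2,1), (0,1,1,1,-2), and let v = (1,2,2,2,3) ∈ ℤ^5. Then M·v = 0, and the quotient group v^⊥ / M(ℤ^5) — where v^⊥ = {x ∈ ℤ^5 : ⟨x,v⟩ = 0} and M(ℤ^5) is the image of the ℤ-linear map x ↦ Mx — is isomorphic to (ℤ/2ℤ) × (ℤ/2ℤ). -/
/-!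
Since `M` is symmetric and `M v = 0`, the image of `M` lies in `v^⊥`. Rows 2–4 of `M w` are
`w₀ + w₄ - 2 wᵢ`, so the coordinates `y₁, y₂, y₃` of any `y = M w` are congruent mod 2.
Conversely every `y ∈ v^⊥` with `y₁ ≡ y₂ ≡ y₃ (mod 2)` has an explicit preimage.
So `M(ℤ^5)` is the kernel of `y ↦ (y₁ + y₃, y₁ + y₂) mod 2` on `v^⊥`, a map onto `(ℤ/2)²`.
-/

/-- The intersection matrix `M`. -/
def interMat : Matrix (Fin 5) (Fin 5) ℤ :=
  !![-6, 1, 1, 1, 0;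
      1,-2, 0, 0, 1;
      1, 0,-2, 0, 1;
      1, 0, 0,-2, 1;
      0, 1, 1, 1,-2]

/-- The multiplicity vector `v = (1,2,2,2,3)`. -/
def multVec : Fin 5 → ℤ := ![1, 2, 2, 2, 3]

/-- The subgroup `v^⊥ = {x ∈ ℤ^5 : ⟨x, v⟩ = 0}`. -/
def perpSubgroup : AddSubgroup (Fin 5 → ℤ) where
  carrier := {x | dotProduct x multVec = 0}
  add_mem' := by
    intro a b ha hb
    simp only [Set.mem_setOf_eq, add_dotProduct] at *
    omega
  zero_mem' := by simp [zero_dotProduct]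
  neg_mem' := by
    intro a ha
    simp only [Set.mem_setOf_eq, neg_dotProduct] at *
    omega

/-- The image subgroup `M(ℤ^5)`. -/
def imageSubgroup : AddSubgroup (Fin 5 → ℤ) :=
  (interMat.mulVecLin.toAddMonoidHom).range

open Matrix

lemma mem_perpSubgroup_iff (x : Fin 5 → ℤ) :
    x ∈ perpSubgroup ↔ x 0 + 2 * x 1 + 2 * x 2 + 2 * x 3 + 3 * x 4 = 0 := by
  change x ⬝ᵥ multVec = 0 ↔ _
  simp [dotProduct, multVec, Fin.sum_univ_five]
  omega

lemma interMat_mulVec (w : Fin 5 → ℤ) :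
    interMat *ᵥ w =
      ![-6 * w 0 + w 1 + w 2 + w 3,
        w 0 - 2 * w 1 + w 4,
        w 0 - 2 * w 2 + w 4,
        w 0 - 2 * w 3 + w 4,
        w 1 + w 2 + w 3 - 2 * w 4] := by
  funext i
  fin_cases i <;> simp [interMat, mulVec, dotProduct, Fin.sum_univ_five] <;> ring

lemma interMat_mulVec_multVec : interMat *ᵥ multVec = 0 := by
  rw [interMat_mulVec]
  funext i
  fin_cases i <;> simp [multVec]

lemma mem_imageSubgroup_iff_of_mem_perpSubgroup {y : Fin 5 → ℤ} (hy : y ∈ perpSubgroup) :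
    y ∈ imageSubgroup ↔ 2 ∣ y 1 + y 3 ∧ 2 ∣ y 1 + y 2 := by
  rw [mem_perpSubgroup_iff] at hy
  constructor
  · rintro ⟨w, hw⟩
    replace hw : interMat *ᵥ w = y := hw
    rw [interMat_mulVec] at hw
    have h1 : w 0 - 2 * w 1 + w 4 = y 1 := congrFun hw 1
    have h2 : w 0 - 2 * w 2 + w 4 = y 2 := congrFun hw 2
    have h3 : w 0 - 2 * w 3 + w 4 = y 3 := congrFun hw 3
    exact ⟨⟨w 0 - w 1 - w 3 + w 4, by omega⟩, ⟨w 0 - w 1 - w 2 + w 4, by omega⟩⟩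
  · rintro ⟨⟨a, ha⟩, ⟨b, hb⟩⟩
    -- Rows 2–5 of `M w = y` solved with `w₀ = w₁`; row 1 then holds because `y ∈ v^⊥`.
    refine ⟨![y 4 + a + b, y 4 + a + b, y 1 + y 4 + a, y 1 + y 4 + b, y 1 + y 4 + a + b], ?_⟩
    change interMat *ᵥ _ = y
    rw [interMat_mulVec]
    funext i
    fin_cases i <;> simp <;> omega

def parityOfSum {ι : Type*} (i j : ι) : (ι → ℤ) →+ ZMod 2 :=
  (Int.castAddHom (ZMod 2)).comp (Pi.evalAddMonoidHom (fun _ ↦ ℤ) i + Pi.evalAddMonoidHom _ j)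

lemma parityOfSum_apply {ι : Type*} (i j : ι) (x : ι → ℤ) :
    parityOfSum i j x = ((x i + x j : ℤ) : ZMod 2) :=
  rfl

def perpToZMod2Sq : perpSubgroup →+ ZMod 2 × ZMod 2 :=
  ((parityOfSum 1 3).prod (parityOfSum 1 2)).comp perpSubgroup.subtype

lemma perpToZMod2Sq_apply (x : perpSubgroup) :
    perpToZMod2Sq x = (parityOfSum 1 3 (x : Fin 5 → ℤ), parityOfSum 1 2 (x : Fin 5 → ℤ)) :=
  rfl

lemma perpToZMod2Sq_surjective : Function.Surjective perpToZMod2Sq := by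
  rintro ⟨c, d⟩
  obtain ⟨a, rfl⟩ := ZMod.intCast_surjective c
  obtain ⟨b, rfl⟩ := ZMod.intCast_surjective d
  have hx : ![-2 * (a + b), 0, b, a, 0] ∈ perpSubgroup := by
    rw [mem_perpSubgroup_iff]
    simp only [cons_val_zero, cons_val_one, cons_val]
    ring
  exact ⟨⟨_, hx⟩, by simp [perpToZMod2Sq_apply, parityOfSum_apply]⟩

lemma ker_perpToZMod2Sq : perpToZMod2Sq.ker = imageSubgroup.addSubgroupOf perpSubgroup := by
  ext ⟨y, hy⟩
  rw [AddMonoidHom.mem_ker, AddSubgroup.mem_addSubgroupOf,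
    mem_imageSubgroup_iff_of_mem_perpSubgroup hy, perpToZMod2Sq_apply, Prod.mk_eq_zero,
    parityOfSum_apply, parityOfSum_apply, ZMod.intCast_zmod_eq_zero_iff_dvd,
    ZMod.intCast_zmod_eq_zero_iff_dvd]
  rfl

theorem stmt0 :
    interMat.mulVec multVec = 0 ∧
    Nonempty ((perpSubgroup ⧸ imageSubgroup.addSubgroupOf perpSubgroup) ≃+
      (ZMod 2 × ZMod 2)) :=
  ⟨interMat_mulVec_multVec,
    ⟨(QuotientAddGroup.quotientAddEquivOfEq ker_perpToZMod2Sq.symm).trans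
      (QuotientAddGroup.quotientKerEquivOfSurjective _ perpToZMod2Sq_surjective)⟩⟩
end

section
/- Let p be a prime and let v denote the p-adic valuation on ℚ_p. Suppose c₂, c₆, c₈, c₁₀, c₁₂, c₁₄, c₁₈ ∈ ℤ_p and x, y ∈ ℚ_p satisfy y³ = x³y + c₁₀x² + x(c₂y² + c₈y + c₁₄) + c₆y² + c₁₂y + c₁₈. If v(x) < 0 and v(y) < 0, then 2·v(y) = 3·v(x). -/
/-!
Compare norms instead of valuations: `‖x‖ > 1`, `‖y‖ > 1` and the coefficients are integral, so
every term other than `y³` and `x³y` has norm at most `max (‖x‖²) (‖x‖‖y‖²)`. If `‖y‖² > ‖x‖³`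
then `y³` strictly dominates all terms on the right, and if `‖y‖² < ‖x‖³` then `x³y` strictly
dominates `y³` and the remaining terms; either way the ultrametric inequality is violated.
-/

section Ultrametric

variable {E : Type*} [SeminormedAddGroup E] [IsUltrametricDist E]

lemma IsUltrametricDist.norm_add_le_of_le {a b : E} {r : ℝ} (ha : ‖a‖ ≤ r) (hb : ‖b‖ ≤ r) :
    ‖a + b‖ ≤ r :=
  (norm_add_le_max a b).trans (max_le ha hb)

lemma IsUltrametricDist.norm_add_lt_of_lt {a b : E} {r : ℝ} (ha : ‖a‖ < r) (hb : ‖b‖ < r) :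
    ‖a + b‖ < r :=
  (norm_add_le_max a b).trans_lt (max_lt ha hb)

end Ultrametric

section E7

open IsUltrametricDist

variable {K : Type*} [NormedField K] [IsUltrametricDist K]

lemma norm_e7_tail_le {c2 c6 c8 c10 c12 c14 c18 x y : K}
    (h2 : ‖c2‖ ≤ 1) (h6 : ‖c6‖ ≤ 1) (h8 : ‖c8‖ ≤ 1) (h10 : ‖c10‖ ≤ 1) (h12 : ‖c12‖ ≤ 1)
    (h14 : ‖c14‖ ≤ 1) (h18 : ‖c18‖ ≤ 1) (hx : 1 ≤ ‖x‖) (hy : 1 ≤ ‖y‖) :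
    ‖c10 * x ^ 2 + x * (c2 * y ^ 2 + c8 * y + c14) + c6 * y ^ 2 + c12 * y + c18‖ ≤
      max (‖x‖ ^ 2) (‖x‖ * ‖y‖ ^ 2) := by
  have hy2 : ‖y‖ ≤ ‖y‖ ^ 2 := by nlinarith
  have hxy2 : ‖y‖ ^ 2 ≤ ‖x‖ * ‖y‖ ^ 2 := le_mul_of_one_le_left (by positivity) hx
  have hcoeff {c : K} (hc : ‖c‖ ≤ 1) {z : K} {r : ℝ} (hz : ‖z‖ ≤ r) : ‖c * z‖ ≤ r := by
    rw [norm_mul]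
    exact (mul_le_of_le_one_left (norm_nonneg z) hc).trans hz
  have hquad : ‖c2 * y ^ 2 + c8 * y + c14‖ ≤ ‖y‖ ^ 2 :=
    norm_add_le_of_le (norm_add_le_of_le (hcoeff h2 (norm_pow y 2).le) (hcoeff h8 hy2))
      (h14.trans (by nlinarith))
  refine norm_add_le_of_le
    (norm_add_le_of_le (norm_add_le_of_le (norm_add_le_of_le ?_ ?_) ?_) ?_) ?_
  · exact (hcoeff h10 (norm_pow x 2).le).trans (le_max_left _ _)
  · rw [norm_mul]
    exact (mul_le_mul_of_nonneg_left hquad (norm_nonneg x)).trans (le_max_right _ _)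
  · exact (hcoeff h6 (norm_pow y 2).le).trans (hxy2.trans (le_max_right _ _))
  · exact (hcoeff h12 hy2).trans (hxy2.trans (le_max_right _ _))
  · exact h18.trans ((one_le_pow₀ hx).trans (le_max_left _ _))

lemma norm_sq_eq_norm_cube_of_eq_add {x y t : K} (hx : 1 < ‖x‖) (hy : 1 < ‖y‖)
    (ht : ‖t‖ ≤ max (‖x‖ ^ 2) (‖x‖ * ‖y‖ ^ 2)) (heq : y ^ 3 = x ^ 3 * y + t) :
    ‖y‖ ^ 2 = ‖x‖ ^ 3 := by
  set X := ‖x‖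
  set Y := ‖y‖
  rcases lt_trichotomy (Y ^ 2) (X ^ 3) with hlt | heq_sq | hgt
  · have hYX : Y < X ^ 2 := by nlinarith
    have hlt' : ‖y ^ 3 + -t‖ < X ^ 3 * Y := by
      refine norm_add_lt_of_lt ?_ (norm_neg t ▸ ht.trans_lt (max_lt ?_ ?_))
      · rw [norm_pow]; nlinarith
      · nlinarith
      · nlinarith [mul_lt_mul_of_pos_left hYX (by positivity : 0 < X * Y)]
    rw [← sub_eq_add_neg, heq, add_sub_cancel_right, norm_mul, norm_pow] at hlt'
    exact (lt_irrefl _ hlt').elim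
  · exact heq_sq
  · have hXY : X < Y := by nlinarith
    have hlt' : ‖x ^ 3 * y + t‖ < Y ^ 3 := by
      refine norm_add_lt_of_lt ?_ (ht.trans_lt (max_lt ?_ ?_))
      · rw [norm_mul, norm_pow]; nlinarith
      · nlinarith
      · nlinarith [mul_lt_mul_of_pos_right hXY (by positivity : 0 < Y ^ 2)]
    rw [← heq, norm_pow] at hlt'
    exact (lt_irrefl _ hlt').elim

end E7

namespace Padic

variable {p : ℕ} [Fact p.Prime]

lemma one_lt_norm_iff_valuation_neg (x : ℚ_[p]) : 1 < ‖x‖ ↔ x.valuation < 0 := by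
  simpa only [not_le] using (norm_le_one_iff_val_nonneg x).not

lemma mul_valuation_eq_of_norm_pow_eq {x y : ℚ_[p]} (hx : x ≠ 0) (hy : y ≠ 0) {m n : ℕ}
    (h : ‖y‖ ^ m = ‖x‖ ^ n) : m * y.valuation = n * x.valuation := by
  have hp : (1 : ℝ) < p := mod_cast (Fact.out : p.Prime).one_lt
  rw [norm_eq_zpow_neg_valuation hx, norm_eq_zpow_neg_valuation hy, ← zpow_natCast,
    ← zpow_natCast, ← zpow_mul, ← zpow_mul, zpow_right_inj₀ (by positivity) hp.ne'] at h
  linarith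

end Padic

/-- For a point on the E₇ family of curves over `ℚ_p` with integral coefficients,
if both `x` and `y` have negative valuation then `2·v(y) = 3·v(x)`. -/
theorem stmt3 (p : ℕ) [Fact p.Prime]
    (c2 c6 c8 c10 c12 c14 c18 : ℤ_[p]) (x y : ℚ_[p])
    (heq : y ^ 3 = x ^ 3 * y + (c10 : ℚ_[p]) * x ^ 2 +
      x * ((c2 : ℚ_[p]) * y ^ 2 + (c8 : ℚ_[p]) * y + (c14 : ℚ_[p])) +
      (c6 : ℚ_[p]) * y ^ 2 + (c12 : ℚ_[p]) * y + (c18 : ℚ_[p]))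
    (hx : x.valuation < 0) (hy : y.valuation < 0) :
    2 * y.valuation = 3 * x.valuation := by
  have hx1 : 1 < ‖x‖ := (Padic.one_lt_norm_iff_valuation_neg x).2 hx
  have hy1 : 1 < ‖y‖ := (Padic.one_lt_norm_iff_valuation_neg y).2 hy
  have htail := norm_e7_tail_le c2.norm_le_one c6.norm_le_one c8.norm_le_one c10.norm_le_one
    c12.norm_le_one c14.norm_le_one c18.norm_le_one hx1.le hy1.le
  have hnorm := norm_sq_eq_norm_cube_of_eq_add hx1 hy1 htail (by rw [heq]; ring)
  exact_mod_cast Padic.mul_valuation_eq_of_norm_pow_eq (norm_pos_iff.1 (one_pos.trans hx1))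
    (norm_pos_iff.1 (one_pos.trans hy1)) hnorm
end

section
/- In the root system Φ of type E₈, realized in ℝ⁸ with the Bourbaki simple roots, the number of roots α ∈ Φ whose height is odd equals 128, and the number of roots of even height equals 112. -/
/-- Membership in the root system of type E₈ in its standard realization in ℝ⁸. -/
def IsE8Root (x : Fin 8 → ℝ) : Prop :=
  (∑ i, x i * x i) = 2 ∧
  ((∀ i, ∃ n : ℤ, x i = n) ∨ (∀ i, ∃ n : ℤ, x i = n + 1 / 2)) ∧
  (∃ m : ℤ, (∑ i, x i) = 2 * m)

/-- The Bourbaki simple roots `α₁, …, α₈` of E₈ (0-indexed). -/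
noncomputable def bourbakiE8 : Fin 8 → Fin 8 → ℝ :=
  ![![1/2, -1/2, -1/2, -1/2, -1/2, -1/2, -1/2, 1/2],
    ![1, 1, 0, 0, 0, 0, 0, 0],
    ![-1, 1, 0, 0, 0, 0, 0, 0],
    ![0, -1, 1, 0, 0, 0, 0, 0],
    ![0, 0, -1, 1, 0, 0, 0, 0],
    ![0, 0, 0, -1, 1, 0, 0, 0],
    ![0, 0, 0, 0, -1, 1, 0, 0],
    ![0, 0, 0, 0, 0, -1, 1, 0]]

/-!
The height of `x = ∑ nᵢ αᵢ` is `⟨ρ, x⟩` for `ρ = (0, 1, 2, 3, 4, 5, 6, 23)`, the sum of the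
fundamental coweights, which pairs to `1` with every simple root. Doubling coordinates identifies
the roots with the integer vectors `y` with `∑ yᵢ² = 8`, all entries of one parity and
`4 ∣ ∑ yᵢ`; these are the `±2eᵢ ± 2eⱼ` and the `(±1, …, ±1)` with an even number of signs
`-1`. Each such `y / 2` is an integer combination of the simple roots, so the roots of a given
height parity are counted by enumerating these `3⁸ + 2⁸` candidate vectors and sorting them by
the parity of `⟨ρ, y⟩ / 2`.
-/

open Matrix

noncomputable def halfVec {ι : Type*} (y : ι → ℤ) : ι → ℝ := fun i => (y i : ℝ) / 2

lemma halfVec_injective {ι : Type*} : Function.Injective (halfVec (ι := ι)) := by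
  intro y y' h
  funext i
  have := congrFun h i
  simp only [halfVec] at this
  exact_mod_cast (div_left_inj' two_ne_zero).mp this

lemma halfVec_sum_smul {ι κ : Type*} [Fintype κ] (n : κ → ℤ) (v : κ → ι → ℤ) :
    halfVec (∑ k, n k • v k) = ∑ k, (n k : ℝ) • halfVec (v k) := by
  funext i
  simp only [halfVec, Finset.sum_apply, Pi.smul_apply, smul_eq_mul]
  push_cast
  rw [Finset.sum_div]
  exact Finset.sum_congr rfl fun k _ => by ring

def twiceBourbakiE8 : Fin 8 → Fin 8 → ℤ :=
  ![![1, -1, -1, -1, -1, -1, -1, 1],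
    ![2, 2, 0, 0, 0, 0, 0, 0],
    ![-2, 2, 0, 0, 0, 0, 0, 0],
    ![0, -2, 2, 0, 0, 0, 0, 0],
    ![0, 0, -2, 2, 0, 0, 0, 0],
    ![0, 0, 0, -2, 2, 0, 0, 0],
    ![0, 0, 0, 0, -2, 2, 0, 0],
    ![0, 0, 0, 0, 0, -2, 2, 0]]

lemma halfVec_twiceBourbakiE8 (i : Fin 8) : halfVec (twiceBourbakiE8 i) = bourbakiE8 i := by
  funext j
  fin_cases i <;> fin_cases j <;> norm_num [halfVec, twiceBourbakiE8, bourbakiE8]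

lemma sum_smul_bourbakiE8 (n : Fin 8 → ℤ) :
    ∑ i, (n i : ℝ) • bourbakiE8 i = halfVec (∑ i, n i • twiceBourbakiE8 i) := by
  simp only [halfVec_sum_smul, halfVec_twiceBourbakiE8]

def e8Rho : Fin 8 → ℤ := ![0, 1, 2, 3, 4, 5, 6, 23]

lemma e8Rho_dotProduct_twiceBourbakiE8 (i : Fin 8) : e8Rho ⬝ᵥ twiceBourbakiE8 i = 2 := by
  fin_cases i <;> decide

lemma e8Rho_dotProduct_sum_smul (n : Fin 8 → ℤ) :
    e8Rho ⬝ᵥ ∑ i, n i • twiceBourbakiE8 i = 2 * ∑ i, n i := by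
  simp only [dotProduct_sum, dotProduct_smul, e8Rho_dotProduct_twiceBourbakiE8, smul_eq_mul,
    Finset.mul_sum, mul_comm]

lemma exists_sum_smul_twiceBourbakiE8_eq (y : Fin 8 → ℤ)
    (hpar : (∀ i, Even (y i)) ∨ ∀ i, Odd (y i)) (hsum : 4 ∣ ∑ i, y i) :
    ∃ n : Fin 8 → ℤ, ∑ i, n i • twiceBourbakiE8 i = y := by
  -- the coefficients are the pairings of `y / 2` with the fundamental coweights
  have hmod : ∀ i, y i % 2 = y 7 % 2 := by
    rcases hpar with h | h <;> intro i
    · rw [Int.even_iff.mp (h i), Int.even_iff.mp (h 7)]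
    · rw [Int.odd_iff.mp (h i), Int.odd_iff.mp (h 7)]
  have h0 := hmod 0; have h1 := hmod 1; have h2 := hmod 2; have h3 := hmod 3
  have h4 := hmod 4; have h5 := hmod 5; have h6 := hmod 6
  rw [Fin.sum_univ_eight] at hsum
  refine ⟨![y 7, (∑ i, y i) / 4 + y 7, (∑ i, y i - 2 * y 0 + 6 * y 7) / 4,
    (y 2 + y 3 + y 4 + y 5 + y 6 + 5 * y 7) / 2, (y 3 + y 4 + y 5 + y 6 + 4 * y 7) / 2,
    (y 4 + y 5 + y 6 + 3 * y 7) / 2, (y 5 + y 6 + 2 * y 7) / 2, (y 6 + y 7) / 2], ?_⟩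
  funext j
  fin_cases j <;>
    simp only [Fin.isValue, Fin.zero_eta, Fin.mk_one, Fin.reduceFinMk, Fin.sum_univ_eight,
      Finset.sum_apply, Pi.mul_apply, Pi.intCast_apply, Int.cast_eq, zsmul_eq_mul, twiceBourbakiE8,
      Int.reduceNeg, cons_val', cons_val, cons_val_zero, cons_val_one, cons_val_fin_one, mul_one,
      mul_neg, mul_zero, add_zero] <;> omega

lemma exists_int_eq_div_two_iff_even (a : ℤ) : (∃ n : ℤ, (a : ℝ) / 2 = n) ↔ Even a := by
  constructor
  · rintro ⟨n, hn⟩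
    exact ⟨n, by exact_mod_cast (by linarith [hn] : (a : ℝ) = n + n)⟩
  · rintro ⟨n, rfl⟩
    exact ⟨n, by push_cast; ring⟩

lemma exists_int_add_half_eq_div_two_iff_odd (a : ℤ) :
    (∃ n : ℤ, (a : ℝ) / 2 = n + 1 / 2) ↔ Odd a := by
  constructor
  · rintro ⟨n, hn⟩
    exact ⟨n, by exact_mod_cast (by linarith [hn] : (a : ℝ) = 2 * n + 1)⟩
  · rintro ⟨n, rfl⟩
    exact ⟨n, by push_cast; ring⟩

lemma isE8Root_halfVec_iff (y : Fin 8 → ℤ) :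
    IsE8Root (halfVec y) ↔
      ∑ i, y i * y i = 8 ∧ ((∀ i, Even (y i)) ∨ ∀ i, Odd (y i)) ∧ 4 ∣ ∑ i, y i := by
  have hnorm : ∑ i, halfVec y i * halfVec y i = ((∑ i, y i * y i : ℤ) : ℝ) / 4 := by
    push_cast
    rw [Finset.sum_div]
    exact Finset.sum_congr rfl fun i _ => by simp only [halfVec]; ring
  have hsum : ∑ i, halfVec y i = ((∑ i, y i : ℤ) : ℝ) / 2 := by
    push_cast
    rw [Finset.sum_div]
    rfl
  rw [IsE8Root, hnorm, hsum]
  simp only [halfVec, exists_int_eq_div_two_iff_even, exists_int_add_half_eq_div_two_iff_odd]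
  refine and_congr ?_ (and_congr Iff.rfl ⟨fun ⟨m, hm⟩ => ⟨m, ?_⟩, fun ⟨m, hm⟩ => ⟨m, ?_⟩⟩)
  · constructor <;> intro h
    · exact_mod_cast (by linarith [h] : ((∑ i, y i * y i : ℤ) : ℝ) = 8)
    · rw [h]; norm_num
  · exact_mod_cast (by linarith [hm] : ((∑ i, y i : ℤ) : ℝ) = 4 * m)
  · rw [hm]; push_cast; ring

lemma exists_halfVec_eq_of_isE8Root {x : Fin 8 → ℝ} (hx : IsE8Root x) :
    ∃ y : Fin 8 → ℤ, halfVec y = x := by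
  rcases hx.2.1 with h | h <;> choose n hn using h
  · exact ⟨fun i => 2 * n i, funext fun i => by simp only [halfVec, hn i]; push_cast; ring⟩
  · exact ⟨fun i => 2 * n i + 1, funext fun i => by simp only [halfVec, hn i]; push_cast; ring⟩

lemma mul_self_eq_one_of_sum_mul_self_eq_card {ι : Type*} [Fintype ι] {y : ι → ℤ}
    (hy : ∀ i, y i ≠ 0) (hsum : ∑ i, y i * y i = Fintype.card ι) (i : ι) : y i * y i = 1 := by
  have hpos : ∀ j, 0 ≤ y j * y j - 1 := fun j => by
    have := mul_self_pos.mpr (hy j); omega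
  have hzero : ∑ j, (y j * y j - 1) = 0 := by
    rw [Finset.sum_sub_distrib, hsum]; simp
  have := (Finset.sum_eq_zero_iff_of_nonneg fun j _ => hpos j).mp hzero i (Finset.mem_univ i)
  omega

def e8DoubledRoots : Finset (Fin 8 → ℤ) :=
  ((Fintype.piFinset fun _ => {-2, 0, 2}) ∪ (Fintype.piFinset fun _ => {-1, 1})).filter
    fun y => ∑ i, y i * y i = 8 ∧ 4 ∣ ∑ i, y i

lemma mem_e8DoubledRoots (y : Fin 8 → ℤ) :
    y ∈ e8DoubledRoots ↔
      ∑ i, y i * y i = 8 ∧ ((∀ i, Even (y i)) ∨ ∀ i, Odd (y i)) ∧ 4 ∣ ∑ i, y i := by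
  simp only [e8DoubledRoots, Finset.mem_filter, Finset.mem_union, Fintype.mem_piFinset,
    Finset.mem_insert, Finset.mem_singleton]
  constructor
  · rintro ⟨h | h, hnorm, hsum⟩
    · refine ⟨hnorm, Or.inl fun i => ?_, hsum⟩
      rcases h i with h | h | h <;> rw [h] <;> decide
    · refine ⟨hnorm, Or.inr fun i => ?_, hsum⟩
      rcases h i with h | h <;> rw [h] <;> decide
  · rintro ⟨hnorm, h | h, hsum⟩
    · refine ⟨Or.inl fun i => ?_, hnorm, hsum⟩
      have hle : y i * y i ≤ 8 :=
        hnorm ▸ Finset.single_le_sum (fun j _ => mul_self_nonneg (y j)) (Finset.mem_univ i)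
      have : -2 ≤ y i ∧ y i ≤ 2 := ⟨by nlinarith, by nlinarith⟩
      have := Int.even_iff.mp (h i)
      omega
    · refine ⟨Or.inr fun i => ?_, hnorm, hsum⟩
      have hnz : ∀ j, y j ≠ 0 := fun j hj => by simpa [hj] using h j
      exact (mul_self_eq_one_iff.mp (mul_self_eq_one_of_sum_mul_self_eq_card hnz hnorm i)).symm

lemma e8Rho_dotProduct_div_two_eq {y n : Fin 8 → ℤ}
    (h : halfVec y = ∑ i, (n i : ℝ) • bourbakiE8 i) : e8Rho ⬝ᵥ y / 2 = ∑ i, n i := by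
  rw [sum_smul_bourbakiE8] at h
  rw [halfVec_injective h, e8Rho_dotProduct_sum_smul, Int.mul_ediv_cancel_left _ two_ne_zero]

lemma card_isE8Root_height (P : ℤ → Prop) [DecidablePred P] :
    Nat.card {x : Fin 8 → ℝ // IsE8Root x ∧
      ∃ n : Fin 8 → ℤ, x = ∑ i, (n i : ℝ) • bourbakiE8 i ∧ P (∑ i, n i)} =
    (e8DoubledRoots.filter fun y => P (e8Rho ⬝ᵥ y / 2)).card := by
  have hset : {x : Fin 8 → ℝ | IsE8Root x ∧
      ∃ n : Fin 8 → ℤ, x = ∑ i, (n i : ℝ) • bourbakiE8 i ∧ P (∑ i, n i)} =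
      halfVec '' ↑(e8DoubledRoots.filter fun y => P (e8Rho ⬝ᵥ y / 2)) := by
    ext x
    simp only [Set.mem_ofPred_eq, Set.mem_image, Finset.coe_filter, mem_e8DoubledRoots]
    constructor
    · rintro ⟨hx, n, hxn, hP⟩
      obtain ⟨y, rfl⟩ := exists_halfVec_eq_of_isE8Root hx
      exact ⟨y, ⟨(isE8Root_halfVec_iff y).mp hx, e8Rho_dotProduct_div_two_eq hxn ▸ hP⟩, rfl⟩
    · rintro ⟨y, ⟨hy, hP⟩, rfl⟩
      obtain ⟨n, hn⟩ := exists_sum_smul_twiceBourbakiE8_eq y hy.2.1 hy.2.2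
      have hyn : halfVec y = ∑ i, (n i : ℝ) • bourbakiE8 i := by rw [sum_smul_bourbakiE8, hn]
      exact ⟨(isE8Root_halfVec_iff y).mpr hy, n, hyn, e8Rho_dotProduct_div_two_eq hyn ▸ hP⟩
  rw [← Set.ncard_coe_finset, ← Set.ncard_image_of_injective _ halfVec_injective, ← hset,
    ← Nat.card_coe_set_eq]
  rfl

/-- In the root system of type E₈, the number of roots of odd height is 128 and the
number of roots of even height is 112, height being the sum of the coefficients in
the simple-root basis. -/
theorem stmt11 :
    Nat.card {x : Fin 8 → ℝ // IsE8Root x ∧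
      ∃ n : Fin 8 → ℤ, x = ∑ i, (n i : ℝ) • bourbakiE8 i ∧ Odd (∑ i, n i)} = 128 ∧
    Nat.card {x : Fin 8 → ℝ // IsE8Root x ∧
      ∃ n : Fin 8 → ℤ, x = ∑ i, (n i : ℝ) • bourbakiE8 i ∧ Even (∑ i, n i)} = 112 := by
  rw [card_isE8Root_height, card_isE8Root_height, e8DoubledRoots, Finset.filter_union]
  constructor <;> decide +kernel
end
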